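/- (a) For every positive integer k, the multiplication endomorphism μ_k : ℤ → ℤ, x ↦ kx, has algebraic entropy h(μ_k) = log k. (b) Let a > b > 0 be coprime integers and r = a/b ∈ ℚ; then the multiplication endomorphism μ_r : ℚ → ℚ, x ↦ rx, has algebraic entropy h(μ_r) = log a. -/

import Mathlib

open Pointwise

/-- The `n`-th φ-trajectory `T_n(φ,F) = F + φ(F) + ⋯ + φ^{n-1}(F)` of a finite subset `F`. -/
noncomputable def traj {G : Type*} [AddCommGroup G] (φ : AddMonoid.End G) (F : Finset G)
    (n : ℕ) : Finset G :=
  letI := Classical.decEq G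
  ∑ k ∈ Finset.range n, F.image (φ ^ k)

/-- The algebraic entropy of `φ` with respect to `F`:
`H(φ,F) = lim_n log|T_n(φ,F)|/n = inf_{n ≥ 1} log|T_n(φ,F)|/n`. -/
noncomputable def entWith {G : Type*} [AddCommGroup G] (φ : AddMonoid.End G) (F : Finset G) : ℝ :=
  ⨅ n : ℕ, Real.log ((traj φ F (n + 1)).card) / (n + 1)

/-- The algebraic entropy `h(φ) = sup { H(φ,F) : F nonempty finite }`, valued in `[0,∞]`. -/
noncomputable def algEnt {G : Type*} [AddCommGroup G] (φ : AddMonoid.End G) : ENNReal :=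
  ⨆ (F : Finset G) (_ : F.Nonempty), ENNReal.ofReal (entWith φ F)


section Generic
variable {G : Type*} [AddCommGroup G] {φ : AddMonoid.End G} {F : Finset G}

lemma mem_traj_zero {x : G} : x ∈ traj φ F 0 ↔ x = 0 := by
  classical
  simp [traj]

lemma mem_traj_succ {n : ℕ} {x : G} :
    x ∈ traj φ F (n + 1) ↔ ∃ y ∈ traj φ F n, ∃ f ∈ F, y + (φ ^ n) f = x := by
  classical
  simp only [traj, Finset.sum_range_succ, Finset.mem_add, Finset.mem_image]
  constructor
  · rintro ⟨y, hy, z, ⟨f, hf, rfl⟩, h⟩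
    exact ⟨y, hy, f, hf, h⟩
  · rintro ⟨y, hy, f, hf, h⟩
    exact ⟨y, hy, _, ⟨f, hf, rfl⟩, h⟩

lemma sum_mem_traj {n : ℕ} {c : ℕ → G} (h : ∀ i < n, c i ∈ F) :
    (∑ i ∈ Finset.range n, (φ ^ i) (c i)) ∈ traj φ F n := by
  induction n with
  | zero => simp [mem_traj_zero]
  | succ n ih =>
      rw [Finset.sum_range_succ]
      exact mem_traj_succ.2 ⟨_, ih (fun i hi => h i (by omega)), c n, h n (by omega), rfl⟩

lemma exists_of_mem_traj {n : ℕ} {x : G} (hx : x ∈ traj φ F n) :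
    ∃ c : ℕ → G, (∀ i < n, c i ∈ F) ∧ x = ∑ i ∈ Finset.range n, (φ ^ i) (c i) := by
  induction n generalizing x with
  | zero =>
      exact ⟨fun _ => 0, by omega, by simpa using mem_traj_zero.1 hx⟩
  | succ n ih =>
      obtain ⟨y, hy, f, hf, rfl⟩ := mem_traj_succ.1 hx
      obtain ⟨c, hc, rfl⟩ := ih hy
      refine ⟨fun i => if i = n then f else c i, ?_, ?_⟩
      · intro i hi
        rcases eq_or_ne i n with h | h
        · simpa [h] using hf
        · simpa [h] using hc i (by omega)
      · rw [Finset.sum_range_succ]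
        have h2 : ∀ i ∈ Finset.range n,
            (φ ^ i) ((fun i => if i = n then f else c i) i) = (φ ^ i) (c i) := by
          intro i hi
          simp only [Finset.mem_range] at hi
          simp [Nat.ne_of_lt hi]
        rw [Finset.sum_congr rfl h2]
        simp

lemma traj_nonempty (hF : F.Nonempty) (n : ℕ) : (traj φ F n).Nonempty := by
  induction n with
  | zero => exact ⟨0, mem_traj_zero.2 rfl⟩
  | succ n ih =>
      obtain ⟨y, hy⟩ := ih
      obtain ⟨f, hf⟩ := hF
      exact ⟨y + (φ ^ n) f, mem_traj_succ.2 ⟨y, hy, f, hf, rfl⟩⟩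

lemma entWith_ge {A : ℝ} (hA : 0 < A)
    (h : ∀ n : ℕ, A ^ (n + 1) ≤ ((traj φ F (n + 1)).card : ℝ)) :
    Real.log A ≤ entWith φ F := by
  refine le_ciInf fun n => ?_
  have hn : (0:ℝ) < (n : ℝ) + 1 := by positivity
  rw [le_div_iff₀ hn]
  have h1 : Real.log (A ^ (n+1)) ≤ Real.log ((traj φ F (n+1)).card) :=
    Real.log_le_log (by positivity) (h n)
  rw [Real.log_pow] at h1
  push_cast at h1 ⊢
  linarith

lemma entWith_le (hF : F.Nonempty) {A C : ℝ} (hA : 1 ≤ A) (hC : 1 ≤ C)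
    (h : ∀ n : ℕ, ((traj φ F (n + 1)).card : ℝ) ≤ C * (n + 1) * A ^ (n + 1)) :
    entWith φ F ≤ Real.log A := by
  have hcard : ∀ n : ℕ, (1:ℝ) ≤ ((traj φ F (n+1)).card : ℝ) := fun n => by
    exact_mod_cast (traj_nonempty hF (n+1)).card_pos
  have hbdd : BddBelow (Set.range fun n : ℕ =>
      Real.log ((traj φ F (n + 1)).card) / ((n : ℝ) + 1)) := by
    refine ⟨0, ?_⟩
    rintro _ ⟨n, rfl⟩
    have h0 := Real.log_nonneg (hcard n)
    positivity
  refine le_of_forall_pos_le_add fun ε hε => ?_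
  obtain ⟨n, hn⟩ := exists_nat_ge (4 * C / ε ^ 2)
  set m : ℝ := (n : ℝ) + 1 with hmdef
  clear_value m
  have hm : (0:ℝ) < m := by rw [hmdef]; positivity
  have hm4 : 4 * C ≤ ε ^ 2 * m := by
    rw [div_le_iff₀ (by positivity)] at hn
    nlinarith [sq_nonneg ε]
  have hexp : C * m ≤ Real.exp (ε * m) := by
    have e1 : ε * m / 2 + 1 ≤ Real.exp (ε * m / 2) := Real.add_one_le_exp _
    have e2 : Real.exp (ε * m) = Real.exp (ε * m / 2) * Real.exp (ε * m / 2) := by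
      rw [← Real.exp_add]; ring_nf
    have e3 : (ε * m / 2 + 1) * (ε * m / 2 + 1) ≤
        Real.exp (ε * m / 2) * Real.exp (ε * m / 2) :=
      mul_le_mul e1 e1 (by positivity) ((by positivity : (0:ℝ) ≤ ε * m / 2 + 1).trans e1)
    have e4 : (ε * m / 2 + 1) * (ε * m / 2 + 1) = ε^2*m*m/4 + ε*m + 1 := by ring
    rw [e4] at e3
    have p1 : 4 * C * m ≤ ε^2 * m * m := by
      have := mul_le_mul_of_nonneg_right hm4 hm.le
      linarith
    have p2 : 0 < ε * m := mul_pos hε hm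
    rw [e2]
    linarith
  have hlog : Real.log ((traj φ F (n+1)).card) ≤ m * (Real.log A + ε) := by
    have l1 : Real.log ((traj φ F (n+1)).card) ≤ Real.log (C * m * A ^ (n+1)) := by
      apply Real.log_le_log (by linarith [hcard n])
      have h5 := h n
      rw [hmdef]
      push_cast at h5 ⊢; linarith
    have l2 : Real.log (C * m * A ^ (n+1)) = Real.log (C * m) + ((n:ℝ)+1) * Real.log A := by
      rw [Real.log_mul (by positivity) (by positivity), Real.log_pow]; push_cast; ring
    have l3 : Real.log (C * m) ≤ ε * m := by
      rw [Real.log_le_iff_le_exp (by positivity)]; exact hexp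
    rw [l2] at l1
    have : ((n:ℝ)+1) = m := hmdef.symm
    rw [this] at l1
    nlinarith
  have key : entWith φ F ≤ Real.log ((traj φ F (n+1)).card) / m := by
    rw [hmdef]; exact ciInf_le hbdd n
  calc entWith φ F ≤ Real.log ((traj φ F (n+1)).card) / m := key
    _ ≤ Real.log A + ε := by rw [div_le_iff₀ hm]; nlinarith [hlog]
end Generic

lemma int_digits (a b : ℤ) (ha : 0 < a) (hco : IsCoprime a b) :
    ∀ (n : ℕ) (z : ℕ → ℤ), (∀ i, i < n → |z i| < a) →
      (∑ i ∈ Finset.range n, z i * a ^ i * b ^ (n - 1 - i)) = 0 → ∀ i, i < n → z i = 0 := by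
  intro n
  induction n with
  | zero => intro z _ _ i hi; omega
  | succ n ih =>
      intro z hz hsum i hi
      simp only [Nat.add_sub_cancel] at hsum
      rw [Finset.sum_range_succ'] at hsum
      -- hsum : ∑ i ∈ range n, z (i+1) * a^(i+1) * b^(n - (i+1)) + z 0 * a^0 * b^(n-0) = 0
      have hterm : ∀ j ∈ Finset.range n,
          z (j+1) * a ^ (j+1) * b ^ (n - (j+1)) = a * (z (j+1) * a ^ j * b ^ (n - 1 - j)) := by
        intro j hj
        have : n - (j+1) = n - 1 - j := by omega
        rw [this, pow_succ]; ring
      rw [Finset.sum_congr rfl hterm, ← Finset.mul_sum] at hsum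
      simp only [pow_zero, Nat.sub_zero, mul_one, one_mul] at hsum
      have hz0 : z 0 = 0 := by
        have hdvd : a ∣ z 0 * b ^ n := by
          refine ⟨-(∑ j ∈ Finset.range n, z (j+1) * a ^ j * b ^ (n - 1 - j)), ?_⟩
          linarith [hsum]
        have hcop : IsCoprime a (b ^ n) := hco.pow_right
        have hza : a ∣ z 0 := hcop.dvd_of_dvd_mul_right hdvd
        exact Int.eq_zero_of_abs_lt_dvd hza (hz 0 (by omega))
      rcases Nat.eq_zero_or_pos i with rfl | hipos
      · exact hz0
      · have hsum' : ∑ j ∈ Finset.range n, z (j+1) * a ^ j * b ^ (n - 1 - j) = 0 := by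
          rw [hz0] at hsum
          simp only [zero_mul, add_zero] at hsum
          rcases mul_eq_zero.1 hsum with h | h
          · exact absurd h ha.ne'
          · exact h
        have := ih (fun j => z (j+1)) (fun j hj => hz (j+1) (by omega)) hsum' (i-1) (by omega)
        simpa [Nat.sub_add_cancel hipos] using this

lemma rat_digits (a b : ℤ) (ha : 0 < a) (hb : 0 < b) (hco : IsCoprime a b)
    (n : ℕ) (z : ℕ → ℤ) (hz : ∀ i, i < n → |z i| < a)
    (hsum : ∑ i ∈ Finset.range n, (z i : ℚ) * ((a : ℚ) / (b : ℚ)) ^ i = 0) :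
    ∀ i, i < n → z i = 0 := by
  rcases n with _ | m
  · intro i hi; omega
  · have hbQ : ((b : ℚ)) ≠ 0 := by
      have : (0:ℚ) < (b:ℚ) := by exact_mod_cast hb
      exact this.ne'
    have key : ((∑ i ∈ Finset.range (m+1), z i * a ^ i * b ^ (m - i) : ℤ) : ℚ) = 0 := by
      push_cast
      have hconv : ∀ i ∈ Finset.range (m+1),
          (z i : ℚ) * (a:ℚ) ^ i * (b:ℚ) ^ (m - i)
            = ((z i : ℚ) * ((a:ℚ)/(b:ℚ)) ^ i) * (b:ℚ) ^ m := by
        intro i hi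
        have him : i ≤ m := by
          have := Finset.mem_range.1 hi; omega
        have hbm : (b:ℚ) ^ m = (b:ℚ) ^ i * (b:ℚ) ^ (m - i) := by
          rw [← pow_add]; congr 1; omega
        rw [div_pow, hbm]
        field_simp
      rw [Finset.sum_congr rfl hconv, ← Finset.sum_mul, hsum, zero_mul]
    have keyZ : (∑ i ∈ Finset.range (m+1), z i * a ^ i * b ^ (m - i) : ℤ) = 0 := by
      exact_mod_cast key
    intro i hi
    refine int_digits a b ha hco (m+1) z hz ?_ i hi
    simpa only [Nat.add_sub_cancel] using keyZ

theorem intCase (k : ℕ) (hk : 0 < k) (φ : AddMonoid.End ℤ)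
    (hφ : ∀ x : ℤ, φ x = (k : ℤ) * x) : algEnt φ = ENNReal.ofReal (Real.log k) := by
  set c : ℤ := (k : ℤ) with hc
  have hc0 : 0 < c := by rw [hc]; exact_mod_cast hk
  have hc1 : 1 ≤ c := hc0
  have hpow : ∀ (n : ℕ) (x : ℤ), (φ ^ n) x = c ^ n * x := by
    intro n
    induction n with
    | zero => intro x; simp
    | succ n ih =>
        intro x
        rw [pow_succ]
        show (φ ^ n) (φ x) = _
        rw [hφ, ih]; ring
  -- lower bound
  have htraj : ∀ n : ℕ, traj φ (Finset.Ico (0:ℤ) c) n = Finset.Ico 0 (c ^ n) := by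
    intro n
    induction n with
    | zero => ext x; simp only [mem_traj_zero, pow_zero, Finset.mem_Ico]; omega
    | succ n ih =>
        ext x
        rw [mem_traj_succ, ih]
        simp only [Finset.mem_Ico]
        have hcn : (0:ℤ) < c ^ n := pow_pos hc0 n
        constructor
        · rintro ⟨y, hy, f, hf, rfl⟩
          rw [hpow]
          have hpsucc : c ^ (n+1) = c ^ n * c := pow_succ c n
          constructor
          · nlinarith [hy.1, hf.1]
          · nlinarith [hy.2, hf.2]
        · intro hx
          refine ⟨x % c ^ n, ⟨Int.emod_nonneg x (by positivity), Int.emod_lt_of_pos x hcn⟩,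
            x / c ^ n, ⟨Int.ediv_nonneg hx.1 hcn.le, ?_⟩, ?_⟩
          · rw [Int.ediv_lt_iff_lt_mul hcn]
            calc x < c ^ (n+1) := hx.2
              _ = c * c ^ n := by ring
          · rw [hpow]
            exact Int.emod_add_mul_ediv x (c ^ n)
  have hF0 : (Finset.Ico (0:ℤ) c).Nonempty := ⟨0, by simp [hc0]⟩
  have hlow : Real.log k ≤ entWith φ (Finset.Ico (0:ℤ) c) := by
    have hk0 : (0:ℝ) < (k:ℝ) := by exact_mod_cast hk
    apply entWith_ge hk0
    intro n
    rw [htraj, Int.card_Ico, sub_zero]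
    have h2 : ((c ^ (n+1)).toNat : ℤ) = c ^ (n+1) := Int.toNat_of_nonneg (by positivity)
    have h3 : (((c ^ (n+1)).toNat : ℤ) : ℝ) = (k:ℝ) ^ (n+1) := by
      rw [h2, hc]; push_cast; ring
    have h4 : (((c ^ (n+1)).toNat : ℕ) : ℝ) = (k:ℝ) ^ (n+1) := by exact_mod_cast h3
    rw [h4]
  -- upper bound
  have hup : ∀ F : Finset ℤ, F.Nonempty → entWith φ F ≤ Real.log k := by
    intro F hF
    set M : ℤ := F.sup' hF (fun x => |x|) with hM
    have hMF : ∀ f ∈ F, |f| ≤ M := fun f hf => Finset.le_sup' _ hf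
    have hM0 : 0 ≤ M := le_trans (abs_nonneg _) (hMF _ hF.choose_spec)
    have habs : ∀ n : ℕ, ∀ x ∈ traj φ F n, |x| ≤ M * n * c ^ n := by
      intro n x hx
      obtain ⟨cc, hcc, rfl⟩ := exists_of_mem_traj hx
      calc |∑ i ∈ Finset.range n, (φ ^ i) (cc i)|
          ≤ ∑ i ∈ Finset.range n, |(φ ^ i) (cc i)| := Finset.abs_sum_le_sum_abs _ _
        _ ≤ ∑ _i ∈ Finset.range n, M * c ^ n := by
            refine Finset.sum_le_sum fun i hi => ?_
            rw [hpow, abs_mul, abs_pow, abs_of_nonneg hc0.le]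
            have h1 : |cc i| ≤ M := hMF _ (hcc i (Finset.mem_range.1 hi))
            have h2 : c ^ i ≤ c ^ n := pow_le_pow_right₀ hc1 (le_of_lt (Finset.mem_range.1 hi))
            nlinarith [pow_pos hc0 i, pow_pos hc0 n, abs_nonneg (cc i)]
        _ = M * n * c ^ n := by
            rw [Finset.sum_const, Finset.card_range, nsmul_eq_mul]; ring
    have hcardle : ∀ n : ℕ,
        ((traj φ F (n+1)).card : ℝ) ≤ (2*(M:ℝ)+1) * ((n:ℝ)+1) * (k:ℝ) ^ (n+1) := by
      intro n
      set B : ℤ := M * (n+1) * c ^ (n+1) with hB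
      have hB0 : 0 ≤ B := by positivity
      have hsub : traj φ F (n+1) ⊆ Finset.Icc (-B) B := by
        intro x hx
        rw [Finset.mem_Icc]
        have h5 := habs (n+1) x hx
        push_cast at h5
        rw [abs_le] at h5
        constructor <;> [linarith [h5.1]; linarith [h5.2]]
      have h1 := Finset.card_le_card hsub
      rw [Int.card_Icc] at h1
      have h3 : ((traj φ F (n+1)).card : ℝ) ≤ (((B + 1 - -B).toNat : ℤ) : ℝ) := by
        exact_mod_cast h1
      have h4 : ((B + 1 - -B).toNat : ℤ) = 2*B+1 := by
        rw [Int.toNat_of_nonneg (by linarith)]; ring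
      rw [h4] at h3
      have h5 : ((2*B+1 : ℤ) : ℝ) = 2*(M:ℝ)*((n:ℝ)+1)*(k:ℝ)^(n+1) + 1 := by
        rw [hB, hc]; push_cast; ring
      rw [h5] at h3
      have hk1 : (1:ℝ) ≤ (k:ℝ) := by exact_mod_cast hk
      have hp : (1:ℝ) ≤ (k:ℝ)^(n+1) := by
        calc (1:ℝ) = 1^(n+1) := (one_pow _).symm
          _ ≤ (k:ℝ)^(n+1) := pow_le_pow_left₀ (by norm_num) hk1 _
      have hM0' : (0:ℝ) ≤ (M:ℝ) := by exact_mod_cast hM0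
      have hn1 : (1:ℝ) ≤ (n:ℝ)+1 := by exact_mod_cast Nat.succ_le_succ (Nat.zero_le n)
      nlinarith [h3]
    have hk1 : (1:ℝ) ≤ (k:ℝ) := by exact_mod_cast hk
    have hM0' : (0:ℝ) ≤ (M:ℝ) := by exact_mod_cast hM0
    exact entWith_le hF hk1 (by linarith) hcardle
  -- assemble
  apply le_antisymm
  · refine iSup_le fun F => iSup_le fun hF => ?_
    exact ENNReal.ofReal_le_ofReal (hup F hF)
  · calc ENNReal.ofReal (Real.log k)
        ≤ ENNReal.ofReal (entWith φ (Finset.Ico (0:ℤ) c)) := ENNReal.ofReal_le_ofReal hlow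
      _ ≤ algEnt φ :=
        le_iSup₂ (f := fun (F : Finset ℤ) (_ : F.Nonempty) => ENNReal.ofReal (entWith φ F))
          _ hF0

theorem ratCase (a b : ℤ) (hb : 0 < b) (hba : b < a) (hco : IsCoprime a b)
    (φ : AddMonoid.End ℚ) (hφ : ∀ x : ℚ, φ x = ((a:ℚ)/(b:ℚ)) * x) :
    algEnt φ = ENNReal.ofReal (Real.log (a:ℝ)) := by
  classical
  have ha : 0 < a := hb.trans hba
  have haQ : (0:ℚ) < (a:ℚ) := by exact_mod_cast ha
  have hbQ : (0:ℚ) < (b:ℚ) := by exact_mod_cast hb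
  set c : ℚ := (a:ℚ)/(b:ℚ) with hc
  have hc0 : 0 < c := by positivity
  have hc1 : 1 ≤ c := by
    rw [hc, le_div_iff₀ hbQ, one_mul]
    exact_mod_cast hba.le
  have hpow : ∀ (n : ℕ) (x : ℚ), (φ ^ n) x = c ^ n * x := by
    intro n
    induction n with
    | zero => intro x; simp
    | succ n ih =>
        intro x
        rw [pow_succ]
        show (φ ^ n) (φ x) = _
        rw [hφ, ih]; ring
  -- lower bound
  set F₀ : Finset ℚ := (Finset.Ico (0:ℤ) a).image (fun m : ℤ => (m:ℚ)) with hF₀def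
  have hF0 : F₀.Nonempty := by
    refine ⟨(0:ℚ), Finset.mem_image.2 ⟨0, ?_, by norm_num⟩⟩
    simp [ha]
  have hcount : ∀ n : ℕ, a.toNat ^ n ≤ (traj φ F₀ n).card := by
    intro n
    set s : Finset (Fin n → ℤ) := Fintype.piFinset (fun _ => Finset.Ico (0:ℤ) a) with hs
    set g : (Fin n → ℤ) → ℚ := fun z => ∑ i : Fin n, ((z i : ℤ) : ℚ) * c ^ (i : ℕ) with hg
    have hmem : ∀ z ∈ s, g z ∈ traj φ F₀ n := by
      intro z hz
      have hzmem : ∀ i : Fin n, z i ∈ Finset.Ico (0:ℤ) a := fun i =>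
        (Fintype.mem_piFinset.1 hz) i
      have h1 : ∀ i < n, (fun i => if h : i < n then ((z ⟨i, h⟩ : ℤ) : ℚ) else 0) i ∈ F₀ := by
        intro i hi
        simp only [dif_pos hi]
        exact Finset.mem_image.2 ⟨z ⟨i, hi⟩, hzmem _, rfl⟩
      have h2 : ∑ i ∈ Finset.range n,
          (φ ^ i) ((fun i => if h : i < n then ((z ⟨i, h⟩ : ℤ) : ℚ) else 0) i) = g z := by
        rw [Finset.sum_range]
        refine Finset.sum_congr rfl fun i _ => ?_
        rw [hpow]
        simp only [dif_pos i.isLt]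
        ring
      have := sum_mem_traj (φ := φ) (F := F₀) h1
      rwa [h2] at this
    have hinj : Set.InjOn g s := by
      intro z hzs w hws hgw
      have hzb : ∀ i : Fin n, 0 ≤ z i ∧ z i < a := fun i =>
        Finset.mem_Ico.1 ((Fintype.mem_piFinset.1 hzs) i)
      have hwb : ∀ i : Fin n, 0 ≤ w i ∧ w i < a := fun i =>
        Finset.mem_Ico.1 ((Fintype.mem_piFinset.1 hws) i)
      set u : ℕ → ℤ := fun i => if h : i < n then z ⟨i, h⟩ - w ⟨i, h⟩ else 0 with hu
      have habs : ∀ i, i < n → |u i| < a := by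
        intro i hi
        rw [hu]
        simp only [dif_pos hi]
        rw [abs_lt]
        have h1 := hzb ⟨i, hi⟩
        have h2 := hwb ⟨i, hi⟩
        exact ⟨by linarith [h1.1, h2.2], by linarith [h1.2, h2.1]⟩
      have hsum0 : ∑ i ∈ Finset.range n, (u i : ℚ) * c ^ i = 0 := by
        rw [Finset.sum_range]
        have hterm : ∀ i : Fin n, ((u (i:ℕ) : ℤ) : ℚ) * c ^ (i:ℕ)
            = ((z i : ℤ):ℚ) * c ^ (i:ℕ) - ((w i : ℤ):ℚ) * c ^ (i:ℕ) := by
          intro i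
          rw [hu]
          simp only [dif_pos i.isLt]
          push_cast
          ring
        rw [Finset.sum_congr rfl (fun i _ => hterm i), Finset.sum_sub_distrib, sub_eq_zero]
        exact hgw
      have hu0 := rat_digits a b ha hb hco n u habs (by rw [hc] at hsum0; exact hsum0)
      funext i
      have h3 := hu0 i i.isLt
      rw [hu] at h3
      simp only [dif_pos i.isLt, Fin.eta] at h3
      omega
    calc a.toNat ^ n = s.card := by
          rw [hs, Fintype.card_piFinset]
          simp [Int.card_Ico]
      _ ≤ (traj φ F₀ n).card := Finset.card_le_card_of_injOn g hmem hinj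
  have hAcast : ((a.toNat : ℕ) : ℝ) = (a : ℝ) := by exact_mod_cast Int.toNat_of_nonneg ha.le
  have hlow : Real.log (a:ℝ) ≤ entWith φ F₀ := by
    apply entWith_ge (by exact_mod_cast ha : (0:ℝ) < (a:ℝ))
    intro n
    rw [← hAcast]
    exact_mod_cast hcount (n+1)
  -- upper bound
  have hup : ∀ F : Finset ℚ, F.Nonempty → entWith φ F ≤ Real.log (a:ℝ) := by
    intro F hF
    set Q : ℚ := F.sup' hF (fun x => |x|) with hQ
    have hQF : ∀ f ∈ F, |f| ≤ Q := fun f hf => Finset.le_sup' _ hf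
    have hQ0 : 0 ≤ Q := le_trans (abs_nonneg _) (hQF _ hF.choose_spec)
    set d : ℤ := ∏ f ∈ F, (f.den : ℤ) with hd
    have hd0 : 0 < d := Finset.prod_pos fun f hf => by positivity
    have hdf : ∀ f ∈ F, ∃ zf : ℤ, f * (d : ℚ) = (zf : ℚ) := by
      intro f hf
      obtain ⟨t, ht⟩ := Finset.dvd_prod_of_mem (fun f : ℚ => (f.den : ℤ)) hf
      refine ⟨f.num * t, ?_⟩
      rw [hd, ht]
      push_cast
      rw [← mul_assoc, Rat.mul_den_eq_num]
    have habs : ∀ n : ℕ, ∀ x ∈ traj φ F n, |x| ≤ Q * n * c ^ n := by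
      intro n x hx
      obtain ⟨cc, hcc, rfl⟩ := exists_of_mem_traj hx
      calc |∑ i ∈ Finset.range n, (φ ^ i) (cc i)|
          ≤ ∑ i ∈ Finset.range n, |(φ ^ i) (cc i)| := Finset.abs_sum_le_sum_abs _ _
        _ ≤ ∑ _i ∈ Finset.range n, Q * c ^ n := by
            refine Finset.sum_le_sum fun i hi => ?_
            rw [hpow, abs_mul, abs_pow, abs_of_nonneg hc0.le]
            have h1 : |cc i| ≤ Q := hQF _ (hcc i (Finset.mem_range.1 hi))
            have h2 : c ^ i ≤ c ^ n := pow_le_pow_right₀ hc1 (le_of_lt (Finset.mem_range.1 hi))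
            nlinarith [pow_pos hc0 i, pow_pos hc0 n, abs_nonneg (cc i)]
        _ = Q * n * c ^ n := by
            rw [Finset.sum_const, Finset.card_range, nsmul_eq_mul]; ring
    have hden : ∀ n : ℕ, ∀ x ∈ traj φ F n,
        ∃ zx : ℤ, x * ((d * b ^ n : ℤ) : ℚ) = (zx : ℚ) := by
      intro n x hx
      obtain ⟨cc, hcc, rfl⟩ := exists_of_mem_traj hx
      have hchoice : ∀ i, i < n → ∃ zi : ℤ, cc i * (d:ℚ) = (zi:ℚ) := fun i hi =>
        hdf _ (hcc i hi)
      refine ⟨∑ i ∈ Finset.range n,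
        (if h : i < n then Classical.choose (hchoice i h) else 0) * a ^ i * b ^ (n - i), ?_⟩
      rw [Finset.sum_mul, Int.cast_sum]
      refine Finset.sum_congr rfl fun i hi => ?_
      have hi' : i < n := Finset.mem_range.1 hi
      rw [hpow]
      simp only [dif_pos hi']
      push_cast
      have hz := Classical.choose_spec (hchoice i hi')
      have e : c ^ i * (b:ℚ) ^ n = (a:ℚ)^i * (b:ℚ)^(n-i) := by
        have hbm : (b:ℚ) ^ n = (b:ℚ)^i * (b:ℚ)^(n-i) := by
          rw [← pow_add]; congr 1; omega
        rw [hc, div_pow, hbm]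
        field_simp
      calc c ^ i * cc i * ((d:ℚ) * (b:ℚ)^n)
          = (cc i * (d:ℚ)) * (c ^ i * (b:ℚ)^n) := by ring
        _ = (((Classical.choose (hchoice i hi') : ℤ) : ℚ)) * ((a:ℚ)^i * (b:ℚ)^(n-i)) := by
            rw [e]; exact congrArg (fun t => t * ((a:ℚ)^i * (b:ℚ)^(n-i))) hz
        _ = (((Classical.choose (hchoice i hi') : ℤ) : ℚ)) * (a:ℚ)^i * (b:ℚ)^(n-i) := by ring
    set NN : ℤ := ⌈Q⌉ with hNN
    have hNN0 : 0 ≤ NN := Int.ceil_nonneg hQ0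
    have hQNN : Q ≤ (NN:ℚ) := Int.le_ceil Q
    have hcardle : ∀ n : ℕ, ((traj φ F (n+1)).card : ℝ)
        ≤ (2*((NN*d : ℤ):ℝ)+1) * ((n:ℝ)+1) * (a:ℝ) ^ (n+1) := by
      intro n
      set B : ℤ := NN * d * (n+1) * a^(n+1) with hB
      have hB0 : 0 ≤ B := by positivity
      set D : ℤ := d * b^(n+1) with hD
      have hD0 : 0 < D := by positivity
      have hDQ : (0:ℚ) < (D:ℚ) := by exact_mod_cast hD0
      have hψ : ∀ x ∈ traj φ F (n+1), ((x * (D:ℚ)).num : ℚ) = x * (D:ℚ) := by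
        intro x hx
        obtain ⟨zx, hzx⟩ := hden (n+1) x hx
        rw [hD]
        push_cast at hzx ⊢
        rw [hzx]
        simp
      have hmaps : ∀ x ∈ traj φ F (n+1), (x * (D:ℚ)).num ∈ Finset.Icc (-B) B := by
        intro x hx
        rw [Finset.mem_Icc, ← abs_le]
        rw [← Int.cast_le (R := ℚ), Int.cast_abs]
        rw [hψ x hx]
        have h1 : |x| ≤ Q * ((n:ℚ)+1) * c^(n+1) := by
          have := habs (n+1) x hx
          push_cast at this
          exact this
        have e2 : c^(n+1) * (b:ℚ)^(n+1) = (a:ℚ)^(n+1) := by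
          rw [hc, div_pow]
          field_simp
        have hBQ : (B:ℚ) = (NN:ℚ) * (d:ℚ) * ((n:ℚ)+1) * (a:ℚ)^(n+1) := by
          rw [hB]; push_cast; ring
        rw [abs_mul, abs_of_pos hDQ, hBQ]
        have h3 : |x| * (D:ℚ) ≤ (Q * ((n:ℚ)+1) * c^(n+1)) * (D:ℚ) := by
          apply mul_le_mul_of_nonneg_right h1 hDQ.le
        have h4 : (Q * ((n:ℚ)+1) * c^(n+1)) * (D:ℚ)
            = Q * (d:ℚ) * ((n:ℚ)+1) * (a:ℚ)^(n+1) := by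
          rw [hD]; push_cast
          calc Q * ((n:ℚ)+1) * c^(n+1) * ((d:ℚ) * (b:ℚ)^(n+1))
              = Q * (d:ℚ) * ((n:ℚ)+1) * (c^(n+1) * (b:ℚ)^(n+1)) := by ring
            _ = Q * (d:ℚ) * ((n:ℚ)+1) * (a:ℚ)^(n+1) := by rw [e2]
        have h5 : Q * (d:ℚ) * ((n:ℚ)+1) * (a:ℚ)^(n+1)
            ≤ (NN:ℚ) * (d:ℚ) * ((n:ℚ)+1) * (a:ℚ)^(n+1) := by
          have hkey := mul_le_mul_of_nonneg_right hQNN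
            (show (0:ℚ) ≤ (d:ℚ)*(((n:ℚ)+1)*(a:ℚ)^(n+1)) by positivity)
          nlinarith [hkey]
        linarith
      have hinj2 : Set.InjOn (fun x : ℚ => (x * (D:ℚ)).num) (traj φ F (n+1)) := by
        intro x hx y hy hxy
        have h1 : x * (D:ℚ) = y * (D:ℚ) := by
          rw [← hψ x hx, ← hψ y hy]
          exact_mod_cast congrArg (fun z : ℤ => (z:ℚ)) hxy
        exact mul_right_cancel₀ hDQ.ne' h1
      have h1 := Finset.card_le_card_of_injOn _ hmaps hinj2
      rw [Int.card_Icc] at h1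
      have h3 : ((traj φ F (n+1)).card : ℝ) ≤ (((B + 1 - -B).toNat : ℤ) : ℝ) := by
        exact_mod_cast h1
      have h4 : ((B + 1 - -B).toNat : ℤ) = 2*B+1 := by
        rw [Int.toNat_of_nonneg (by linarith)]; ring
      rw [h4] at h3
      have h5 : ((2*B+1 : ℤ) : ℝ) = 2*((NN*d:ℤ):ℝ)*((n:ℝ)+1)*(a:ℝ)^(n+1) + 1 := by
        rw [hB]; push_cast; ring
      rw [h5] at h3
      have ha1 : (1:ℝ) ≤ (a:ℝ) := by exact_mod_cast ha
      have hp : (1:ℝ) ≤ (a:ℝ)^(n+1) := by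
        calc (1:ℝ) = 1^(n+1) := (one_pow _).symm
          _ ≤ (a:ℝ)^(n+1) := pow_le_pow_left₀ (by norm_num) ha1 _
      have hNd : (0:ℝ) ≤ ((NN*d:ℤ):ℝ) := by
        have : 0 ≤ NN*d := mul_nonneg hNN0 hd0.le
        exact_mod_cast this
      have hn1 : (1:ℝ) ≤ (n:ℝ)+1 := by exact_mod_cast Nat.succ_le_succ (Nat.zero_le n)
      nlinarith [h3]
    have ha1 : (1:ℝ) ≤ (a:ℝ) := by exact_mod_cast ha
    have hNd : (0:ℝ) ≤ ((NN*d:ℤ):ℝ) := by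
      have : 0 ≤ NN*d := mul_nonneg hNN0 hd0.le
      exact_mod_cast this
    exact entWith_le hF ha1 (by linarith) hcardle
  -- assemble
  apply le_antisymm
  · refine iSup_le fun F => iSup_le fun hF => ?_
    exact ENNReal.ofReal_le_ofReal (hup F hF)
  · calc ENNReal.ofReal (Real.log (a:ℝ))
        ≤ ENNReal.ofReal (entWith φ F₀) := ENNReal.ofReal_le_ofReal hlow
      _ ≤ algEnt φ :=
        le_iSup₂ (f := fun (F : Finset ℚ) (_ : F.Nonempty) => ENNReal.ofReal (entWith φ F))
          _ hF0

/-- (a) `h(μ_k : ℤ → ℤ) = log k` for every positive integer `k`;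
(b) for coprime integers `a > b > 0` and `r = a/b`, `h(μ_r : ℚ → ℚ) = log a`. -/
theorem stmt7 :
    (∀ k : ℕ, 0 < k →
      algEnt (AddMonoidHom.mulLeft (k : ℤ) : AddMonoid.End ℤ) =
        ENNReal.ofReal (Real.log k)) ∧
    (∀ a b : ℤ, 0 < b → b < a → IsCoprime a b →
      algEnt (AddMonoidHom.mulLeft ((a : ℚ) / (b : ℚ)) : AddMonoid.End ℚ) =
        ENNReal.ofReal (Real.log (a : ℝ))) := by
  constructor
  · intro k hk
    exact intCase k hk _ (fun x => rfl)
  · intro a b hb hba hco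
    exact ratCase a b hb hba hco _ (fun x => rfl)
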